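/- arXiv:2407.10258 — 2 statements merged into one kernel-verified Lean document; each statement's English description precedes it below -/
import Mathlib

section
/- Let f : ℝ → ℝ be continuous and nonnegative with F(s) := ∫₀^s f(t) dt, and suppose there exist α₀ > 0 and β₀ > 0 with liminf_{s→+∞} f(s) s e^{−α₀ s²} ≥ β₀. Then for every δ > 0 and every T > 0 there exists R_δ > 0 such that for all t ∈ [0, T] and all s ≥ R_δ: F(t + s) − F(t) ≥ ((β₀ − δ)/(2α₀)) · e^{α₀(t+s)²}/s². -/
open MeasureTheory Real Filter Set

noncomputable section

/-- The plane `ℝ²`. -/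
abbrev Plane := EuclideanSpace ℝ (Fin 2)

/-- Elements of the Sobolev space `H¹(ℝ²)`: an `L²` function together with a weak
gradient lying in `L²` (characterized by integration by parts against smooth
compactly supported test functions). -/
structure H1 : Type where
  u : Plane → ℝ
  grad : Plane → Plane
  memL2_u : MemLp u 2 (volume : Measure Plane)
  memL2_grad : MemLp grad 2 (volume : Measure Plane)
  weak_grad : ∀ φ : Plane → ℝ, ContDiff ℝ (⊤ : ℕ∞) φ → HasCompactSupport φ →
      ∀ i : Fin 2,
        ∫ x, u x * fderiv ℝ φ x (EuclideanSpace.single i (1:ℝ)) =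
          - ∫ x, grad x i * φ x

/-- `F(s) = ∫₀ˢ f(t) dt`. -/
def Fprim (f : ℝ → ℝ) (s : ℝ) : ℝ := ∫ t in (0:ℝ)..s, f t

/-- `‖∇u‖₂²`. -/
def gradNormSq (U : H1) : ℝ := ∫ x, ‖U.grad x‖ ^ 2

/-- `‖u‖₂²`. -/
def massSq (U : H1) : ℝ := ∫ x, (U.u x) ^ 2

/-- The energy functional `I(u) = ½‖∇u‖₂² - ∫ F(u)`. -/
def energy (f : ℝ → ℝ) (U : H1) : ℝ :=
  (1/2) * gradNormSq U - ∫ x, Fprim f (U.u x)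

/-- The mass sphere `S_c = {u ∈ H¹ : ∫ u² = c²}`. -/
def msphere (c : ℝ) : Set H1 := {U | massSq U = c ^ 2}

/-- Radially symmetric function. -/
def IsRadial (U : H1) : Prop := ∀ x y : Plane, ‖x‖ = ‖y‖ → U.u x = U.u y

/-- Radially non-increasing function. -/
def IsRadialNonincreasing (U : H1) : Prop :=
  ∀ x y : Plane, ‖x‖ ≤ ‖y‖ → U.u y ≤ U.u x

/-- Everywhere positive function. -/
def IsPositiveFn (U : H1) : Prop := ∀ x, 0 < U.u x

/-- Weak solution of `-Δu + λ u = f(u)` in `ℝ²`, tested against `H¹` functions. -/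
def IsWeakSolution (f : ℝ → ℝ) (lam : ℝ) (U : H1) : Prop :=
  ∀ V : H1,
    (∫ x, (inner ℝ (U.grad x) (V.grad x) : ℝ)) + lam * ∫ x, U.u x * V.u x
      = ∫ x, f (U.u x) * V.u x

/-- Standing assumptions: `f` is continuous and vanishes on `(-∞,0]`. -/
def Hf0 (f : ℝ → ℝ) : Prop := Continuous f ∧ ∀ s ≤ 0, f s = 0

/-- (f₁): `f(0)=0`, `f>0` on `(0,∞)`, and for some `p ∈ (2,4)` one has
`0 < liminf_{s→0⁺} f(s)/s^{p-1} ≤ limsup_{s→0⁺} f(s)/s^{p-1} < ∞`. -/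
def Hf1 (f : ℝ → ℝ) (p : ℝ) : Prop :=
  f 0 = 0 ∧ (∀ s > 0, 0 < f s) ∧ 2 < p ∧ p < 4 ∧
    ∃ m M : ℝ, 0 < m ∧
      (∀ᶠ s in nhdsWithin 0 (Ioi 0), m ≤ f s / s ^ (p - 1)) ∧
      (∀ᶠ s in nhdsWithin 0 (Ioi 0), f s / s ^ (p - 1) ≤ M)

/-- (f₂): critical exponential growth of exponent `α₀`. -/
def Hf2 (f : ℝ → ℝ) (α₀ : ℝ) : Prop :=
  0 < α₀ ∧
  (∀ α > α₀, Tendsto (fun s => f s * exp (-α * s ^ 2)) atTop (nhds 0)) ∧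
  (∀ α < α₀, Tendsto (fun s => f s * exp (-α * s ^ 2)) atTop atTop)

/-- (f₃): `F(s)/(f(s)s) → 0` as `s → +∞`. -/
def Hf3 (f : ℝ → ℝ) : Prop :=
  Tendsto (fun s => Fprim f s / (f s * s)) atTop (nhds 0)

/-- (f₄): `liminf_{s→+∞} f(s) s e^{-α₀ s²} ≥ β₀`. -/
def Hf4 (f : ℝ → ℝ) (α₀ β₀ : ℝ) : Prop :=
  0 < β₀ ∧ ∀ b < β₀, ∀ᶠ s in atTop, b ≤ f s * s * exp (-α₀ * s ^ 2)

/-- (f₅): `f` is non-decreasing on `(0,∞)`. -/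
def Hf5 (f : ℝ → ℝ) : Prop := ∀ s t : ℝ, 0 < s → s ≤ t → f s ≤ f t

/-- The set `V_c = {u ∈ S_c : ‖∇u‖₂² < ρ}`. -/
def Vc (c ρ : ℝ) : Set H1 := {U | U ∈ msphere c ∧ gradNormSq U < ρ}

/-- The local minimum level `m_c = inf_{V_c} I`. -/
def mloc (f : ℝ → ℝ) (c ρ : ℝ) : ℝ := sInf (energy f '' Vc c ρ)

lemma hasDerivAt_aux (α₀ : ℝ) (hα : 0 < α₀) (τ : ℝ) (hτ : 0 < τ) :
    HasDerivAt (fun u : ℝ => Real.exp (α₀ * u ^ 2) / (2 * α₀ * u ^ 2))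
      (Real.exp (α₀ * τ ^ 2) * (α₀ * τ ^ 2 - 1) / (α₀ * τ ^ 3)) τ := by
  have h1 : HasDerivAt (fun u : ℝ => α₀ * u ^ 2) (α₀ * (2 * τ)) τ := by
    simpa using (hasDerivAt_pow 2 τ).const_mul α₀
  have h2 : HasDerivAt (fun u : ℝ => Real.exp (α₀ * u ^ 2))
      (Real.exp (α₀ * τ ^ 2) * (α₀ * (2 * τ))) τ := h1.exp
  have h3 : HasDerivAt (fun u : ℝ => 2 * α₀ * u ^ 2) (2 * α₀ * (2 * τ)) τ := by
    simpa using (hasDerivAt_pow 2 τ).const_mul (2 * α₀)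
  have hne : 2 * α₀ * τ ^ 2 ≠ 0 := by positivity
  have : HasDerivAt (fun u : ℝ => Real.exp (α₀ * u ^ 2) / (2 * α₀ * u ^ 2)) _ τ := h2.div h3 hne
  convert this using 1
  have hτne : τ ≠ 0 := hτ.ne'
  field_simp


set_option maxHeartbeats 800000 in
/-- Lemma 4.3: under (f₄), for every `δ > 0` and `T > 0` there is `R_δ > 0` such
that `F(t+s) - F(t) ≥ ((β₀-δ)/(2α₀)) e^{α₀(t+s)²}/s²` whenever `t ∈ [0,T]` and `s ≥ R_δ`. -/
theorem F_growth_estimate (f : ℝ → ℝ) (α₀ β₀ : ℝ)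
    (hf : Continuous f) (hf_nonneg : ∀ s, 0 ≤ f s)
    (hα₀ : 0 < α₀) (hβ₀ : 0 < β₀)
    (hf4 : ∀ b < β₀, ∀ᶠ s in atTop, b ≤ f s * s * exp (-α₀ * s ^ 2)) :
    ∀ δ > 0, ∀ T > 0, ∃ R > 0, ∀ t ∈ Icc (0:ℝ) T, ∀ s : ℝ, R ≤ s →
      ((β₀ - δ) / (2 * α₀)) * exp (α₀ * (t + s) ^ 2) / s ^ 2
        ≤ Fprim f (t + s) - Fprim f t := by
  intro δ hδ T hT
  -- difference of primitives is the integral over [t, t+s]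
  have hFdiff : ∀ t s : ℝ, Fprim f (t + s) - Fprim f t = ∫ τ in t..(t + s), f τ := by
    intro t s
    have := intervalIntegral.integral_add_adjacent_intervals
      (hf.intervalIntegrable (μ := volume) 0 t) (hf.intervalIntegrable (μ := volume) t (t + s))
    simp only [Fprim]
    linarith
  rcases le_or_gt β₀ δ with hle | hlt
  · -- trivial case: LHS ≤ 0
    refine ⟨1, one_pos, ?_⟩
    intro t ht s hs
    have h1 : 0 ≤ Fprim f (t + s) - Fprim f t := by
      rw [hFdiff]
      apply intervalIntegral.integral_nonneg (by linarith)
      intro τ _; exact hf_nonneg τ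
    have h2 : ((β₀ - δ) / (2 * α₀)) * exp (α₀ * (t + s) ^ 2) / s ^ 2 ≤ 0 := by
      apply div_nonpos_of_nonpos_of_nonneg _ (sq_nonneg s)
      apply mul_nonpos_of_nonpos_of_nonneg _ (exp_pos _).le
      apply div_nonpos_of_nonpos_of_nonneg (by linarith) (by linarith)
    linarith
  · -- main case
    set b : ℝ := β₀ - δ / 2 with hbdef
    have hb0 : 0 < b := by simp only [hbdef]; linarith
    have hbβ : b < β₀ := by simp only [hbdef]; linarith
    clear_value b
    obtain ⟨S₁, hS₁⟩ := eventually_atTop.mp (hf4 b hbβ)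
    set S₀ : ℝ := max S₁ (T + 1) with hS₀def
    have hS₀pos : 0 < S₀ := lt_of_lt_of_le (by linarith) (le_max_right _ _)
    have hS₀T : T ≤ S₀ := le_trans (by linarith) (le_max_right _ _)
    have hS₀S₁ : S₁ ≤ S₀ := le_max_left _ _
    set g : ℝ → ℝ := fun u => Real.exp (α₀ * u ^ 2) / (2 * α₀ * u ^ 2) with hgdef
    set C : ℝ := g S₀ with hCdef
    have hC : 0 < C := by simp only [hCdef, hgdef]; positivity
    set K : ℝ := 8 * α₀ * b * C / δ with hKdef
    have hK : 0 < K := by positivity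
    clear_value C K
    refine ⟨max S₀ (max ((16 * β₀ * T + 8 * β₀ * T ^ 2) / δ + 1) (4 * K / α₀ ^ 2 + 1)),
      lt_of_lt_of_le hS₀pos (le_max_left _ _), ?_⟩
    intro t ht s hs
    obtain ⟨ht0, htT⟩ := ht
    have hsS₀ : S₀ ≤ s := le_trans (le_max_left _ _) hs
    have hs1 : (1:ℝ) ≤ s := by
      have h' : (16 * β₀ * T + 8 * β₀ * T ^ 2) / δ + 1 ≤ s :=
        le_trans (le_trans (le_max_left _ _) (le_max_right _ _)) hs
      have : 0 ≤ (16 * β₀ * T + 8 * β₀ * T ^ 2) / δ := by positivity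
      linarith
    have hs0 : 0 < s := by linarith
    have hsK : 4 * K / α₀ ^ 2 + 1 ≤ s :=
      le_trans (le_trans (le_max_right _ _) (le_max_right _ _)) hs
    set x : ℝ := t + s with hxdef
    have hxs : s ≤ x := by simp only [hxdef]; linarith
    have hx0 : 0 < x := lt_of_lt_of_le hs0 hxs
    have hS₀x : S₀ ≤ x := le_trans hsS₀ hxs
    have htS₀ : t ≤ S₀ := le_trans htT hS₀T
    have hx2 : x ^ 2 = s ^ 2 + 2 * t * s + t ^ 2 := by rw [hxdef]; ring
    set E : ℝ := Real.exp (α₀ * x ^ 2) with hEdef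
    have hE : 0 < E := exp_pos _
    clear_value E
    -- Step 1: pointwise bound b * g' τ ≤ f τ on [S₀, x]
    have hpt : ∀ τ ∈ Icc S₀ x,
        b * (Real.exp (α₀ * τ ^ 2) * (α₀ * τ ^ 2 - 1) / (α₀ * τ ^ 3)) ≤ f τ := by
      intro τ hτ
      have hτ0 : 0 < τ := lt_of_lt_of_le hS₀pos hτ.1
      have h1 : b ≤ f τ * τ * Real.exp (-α₀ * τ ^ 2) := hS₁ τ (le_trans hS₀S₁ hτ.1)
      have h2 : b * Real.exp (α₀ * τ ^ 2) ≤ f τ * τ := by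
        have h3 := mul_le_mul_of_nonneg_right h1 (Real.exp_pos (α₀ * τ ^ 2)).le
        have h4 : f τ * τ * Real.exp (-α₀ * τ ^ 2) * Real.exp (α₀ * τ ^ 2) = f τ * τ := by
          rw [mul_assoc, ← Real.exp_add]
          norm_num
        linarith [h4 ▸ h3]
      have h5 : (α₀ * τ ^ 2 - 1) / (α₀ * τ ^ 3) ≤ 1 / τ := by
        rw [div_le_div_iff₀ (by positivity) hτ0]
        nlinarith
      have h6 : b * (Real.exp (α₀ * τ ^ 2) * (α₀ * τ ^ 2 - 1) / (α₀ * τ ^ 3))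
          ≤ b * (Real.exp (α₀ * τ ^ 2) * (1 / τ)) := by
        apply mul_le_mul_of_nonneg_left _ hb0.le
        rw [mul_div_assoc]
        exact mul_le_mul_of_nonneg_left h5 (Real.exp_pos _).le
      have h7 : b * (Real.exp (α₀ * τ ^ 2) * (1 / τ)) ≤ f τ := by
        rw [mul_one_div, ← mul_div_assoc, div_le_iff₀ hτ0]
        exact h2
      linarith
    -- Step 2: FTC for g on [S₀, x]
    have hftc : ∫ τ in S₀..x, Real.exp (α₀ * τ ^ 2) * (α₀ * τ ^ 2 - 1) / (α₀ * τ ^ 3)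
        = g x - g S₀ := by
      apply intervalIntegral.integral_eq_sub_of_hasDerivAt
      · intro τ hτ
        rw [uIcc_of_le hS₀x] at hτ
        exact hasDerivAt_aux α₀ hα₀ τ (lt_of_lt_of_le hS₀pos hτ.1)
      · apply ContinuousOn.intervalIntegrable
        apply ContinuousOn.div
        · fun_prop
        · fun_prop
        · intro τ hτ
          rw [uIcc_of_le hS₀x] at hτ
          have : 0 < τ := lt_of_lt_of_le hS₀pos hτ.1
          positivity
    -- Step 3: integral comparison
    have hint : b * (g x - C) ≤ ∫ τ in S₀..x, f τ := by
      rw [hCdef, ← hftc, ← intervalIntegral.integral_const_mul]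
      apply intervalIntegral.integral_mono_on hS₀x _ (hf.intervalIntegrable (μ := volume) S₀ x) hpt
      apply IntervalIntegrable.const_mul
      apply ContinuousOn.intervalIntegrable
      apply ContinuousOn.div
      · fun_prop
      · fun_prop
      · intro τ hτ
        rw [uIcc_of_le hS₀x] at hτ
        have : 0 < τ := lt_of_lt_of_le hS₀pos hτ.1
        positivity
    -- Step 4: F(t+s) - F(t) ≥ ∫_{S₀}^x f
    have hF : ∫ τ in S₀..x, f τ ≤ Fprim f x - Fprim f t := by
      rw [hxdef, hFdiff t s]
      have hsplit := intervalIntegral.integral_add_adjacent_intervals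
        (hf.intervalIntegrable (μ := volume) t S₀) (hf.intervalIntegrable (μ := volume) S₀ (t + s))
      have hnn : 0 ≤ ∫ τ in t..S₀, f τ :=
        intervalIntegral.integral_nonneg htS₀ (fun τ _ => hf_nonneg τ)
      rw [← hxdef] at hsplit ⊢
      linarith
    clear_value x
    -- Step 5: numeric estimates
    have hδs : 16 * β₀ * T + 8 * β₀ * T ^ 2 ≤ δ * s := by
      have h' : (16 * β₀ * T + 8 * β₀ * T ^ 2) / δ ≤ s := by
        have := le_trans (le_trans (le_max_left _ _) (le_max_right _ _)) hs
        linarith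
      have := (div_le_iff₀ hδ).mp h'
      linarith
    have hA : (δ / 4) * s ^ 2 ≤ b * s ^ 2 - (β₀ - δ) * x ^ 2 := by
      have e1 : (β₀ - δ) * (2 * t * s + t ^ 2) ≤ β₀ * (2 * T * s + T ^ 2) := by
        apply mul_le_mul (by linarith) _ _ hβ₀.le
        · linarith only [mul_le_mul_of_nonneg_right htT hs0.le, pow_le_pow_left₀ ht0 htT 2]
        · linarith only [mul_nonneg ht0 hs0.le, sq_nonneg t]
      have e2 : β₀ * (2 * T * s + T ^ 2) ≤ (δ / 4) * s ^ 2 := by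
        linarith only [mul_le_mul_of_nonneg_right hδs hs0.le,
          mul_nonneg (mul_nonneg hβ₀.le hT.le) hs0.le,
          mul_nonneg (mul_nonneg hβ₀.le hT.le) (by linarith only [hs1] : (0:ℝ) ≤ s),
          mul_nonneg (mul_nonneg hβ₀.le (sq_nonneg T)) (by linarith only [hs1] : (0:ℝ) ≤ s - 1),
          mul_nonneg hβ₀.le (sq_nonneg T)]
      rw [hx2, hbdef]; linarith only [e1, e2]
    have hB : K * x ^ 2 ≤ E := by
      have hy : 0 ≤ α₀ * x ^ 2 / 2 := by positivity
      have h1 : α₀ * x ^ 2 / 2 + 1 ≤ Real.exp (α₀ * x ^ 2 / 2) := Real.add_one_le_exp _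
      have hEeq : E = Real.exp (α₀ * x ^ 2 / 2) ^ 2 := by
        rw [hEdef, ← Real.exp_nat_mul]; push_cast; ring_nf
      have h2 : (α₀ * x ^ 2 / 2) ^ 2 ≤ E := by
        rw [hEeq]; apply pow_le_pow_left₀ hy (by linarith)
      have hxK : 4 * K / α₀ ^ 2 ≤ x ^ 2 := by
        have hx1 : 1 ≤ x := le_trans hs1 hxs
        have hx4 : 4 * K / α₀ ^ 2 + 1 ≤ x := le_trans hsK hxs
        have hxx : 0 ≤ x * (x - 1) := mul_nonneg hx0.le (by linarith only [hx1])
        linarith only [hx4, hxx]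
      have h3 : 4 * K ≤ α₀ ^ 2 * x ^ 2 := by
        have := (div_le_iff₀ (by positivity : (0:ℝ) < α₀ ^ 2)).mp hxK
        linarith only [this]
      have h4 := mul_le_mul_of_nonneg_right h3 (sq_nonneg x)
      linarith only [h2, h4]
    have main : (β₀ - δ) * E * x ^ 2 ≤ b * E * s ^ 2 - 2 * α₀ * b * C * (s ^ 2 * x ^ 2) := by
      have m1 : E * ((δ / 4) * s ^ 2) ≤ E * (b * s ^ 2 - (β₀ - δ) * x ^ 2) :=
        mul_le_mul_of_nonneg_left hA hE.le
      have m2 : K * x ^ 2 * ((δ / 4) * s ^ 2) ≤ E * ((δ / 4) * s ^ 2) :=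
        mul_le_mul_of_nonneg_right hB (by positivity)
      have m3 : K * x ^ 2 * ((δ / 4) * s ^ 2) = 2 * α₀ * b * C * (s ^ 2 * x ^ 2) := by
        rw [hKdef]; field_simp; ring
      linarith only [m1, m2, m3]
    -- Step 6: conclude
    have hxne : (x:ℝ) ^ 2 ≠ 0 := by positivity
    have hsne : (s:ℝ) ^ 2 ≠ 0 := by positivity
    have hαne : (2 * α₀ : ℝ) ≠ 0 := by positivity
    have hfinal : ((β₀ - δ) / (2 * α₀)) * E / s ^ 2 ≤ b * (g x - C) := by
      have hden : (0:ℝ) < 2 * α₀ * (s ^ 2 * x ^ 2) := by positivity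
      calc ((β₀ - δ) / (2 * α₀)) * E / s ^ 2
          = ((β₀ - δ) * E * x ^ 2) / (2 * α₀ * (s ^ 2 * x ^ 2)) := by
            field_simp
        _ ≤ (b * E * s ^ 2 - 2 * α₀ * b * C * (s ^ 2 * x ^ 2)) / (2 * α₀ * (s ^ 2 * x ^ 2)) :=
            (div_le_div_iff_of_pos_right hden).mpr main
        _ = b * (g x - C) := by
            rw [hgdef, hEdef]; field_simp
    exact le_trans hfinal (le_trans hint hF)
end
end

section
/- Assume f satisfies (f₁), (f₂) and (f₃). Then for every ε > 0 there exists C_ε > 0 such that F(s) ≤ C_ε s^p + ε f(s) s for all s ≥ 0 (and hence for all s ∈ ℝ, since f and F vanish on (−∞,0]). -/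
open MeasureTheory Real Filter Set

noncomputable section

/-- Remark 2.1(iv): under (f₁)–(f₃), for every `ε > 0` there is `C_ε > 0` with
`F(s) ≤ C_ε s^p + ε f(s) s` for all `s ≥ 0`. -/
theorem F_le_Cp_plus_eps_fs (f : ℝ → ℝ) (p α₀ : ℝ)
    (hf0 : Hf0 f) (hf1 : Hf1 f p) (hf2 : Hf2 f α₀) (hf3 : Hf3 f) :
    ∀ ε > 0, ∃ C > 0, ∀ s : ℝ, 0 ≤ s →
      Fprim f s ≤ C * s ^ p + ε * f s * s := by
  obtain ⟨hcont, hneg⟩ := hf0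
  obtain ⟨hf00, hfpos, hp2, hp4, m, M, hm, hlo, hhi⟩ := hf1
  intro ε hε
  have hfnn : ∀ t : ℝ, 0 ≤ f t := by
    intro t
    rcases le_or_gt t 0 with h | h
    · rw [hneg t h]
    · exact (hfpos t h).le
  have hint : ∀ a b : ℝ, IntervalIntegrable f volume a b :=
    fun a b => hcont.intervalIntegrable a b
  have hFmono : ∀ a b : ℝ, a ≤ b → Fprim f a ≤ Fprim f b := by
    intro a b hab
    have h := intervalIntegral.integral_add_adjacent_intervals (hint 0 a) (hint a b)
    have h2 : 0 ≤ ∫ t in a..b, f t :=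
      intervalIntegral.integral_nonneg hab (fun t _ => hfnn t)
    show (∫ t in (0:ℝ)..a, f t) ≤ ∫ t in (0:ℝ)..b, f t
    linarith
  -- extract δ and M bound near 0
  rw [eventually_nhdsWithin_iff, Metric.eventually_nhds_iff] at hhi
  obtain ⟨δ, hδ, hM⟩ := hhi
  have hMbd : ∀ s : ℝ, 0 < s → s < δ → f s ≤ M * s ^ (p - 1) := by
    intro s hs hsδ
    have h1 : dist s 0 < δ := by
      rw [Real.dist_eq, sub_zero, abs_of_pos hs]; exact hsδ
    have h2 := hM h1 hs
    have hsp : (0:ℝ) < s ^ (p - 1) := Real.rpow_pos_of_pos hs _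
    calc f s = f s / s ^ (p-1) * s ^ (p-1) := by field_simp
    _ ≤ M * s ^ (p-1) := by
        apply mul_le_mul_of_nonneg_right h2 hsp.le
  have hM0 : 0 < M := by
    have h1 : 0 < f (δ/2) / (δ/2) ^ (p-1) := by
      apply div_pos (hfpos _ (by linarith)) (Real.rpow_pos_of_pos (by linarith) _)
    have hd : dist (δ/2) (0:ℝ) < δ := by
      rw [Real.dist_eq, sub_zero, abs_of_pos (by linarith)]; linarith
    have hmem : (δ/2:ℝ) ∈ Ioi (0:ℝ) := by
      rw [mem_Ioi]; linarith
    have h2 := hM hd hmem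
    linarith
  -- extract R from hf3
  obtain ⟨a, ha⟩ := Filter.eventually_atTop.mp (Metric.tendsto_nhds.mp hf3 ε hε)
  set R : ℝ := max a (max δ 1) with hR
  have hR1 : (1:ℝ) ≤ R := le_trans (le_max_right δ 1) (le_max_right a _)
  have hRδ : δ ≤ R := le_trans (le_max_left δ 1) (le_max_right a _)
  have hRpos : (0:ℝ) < R := by linarith
  have hFR : 0 ≤ Fprim f R :=
    intervalIntegral.integral_nonneg hRpos.le (fun t _ => hfnn t)
  have hδp : (0:ℝ) < δ ^ p := Real.rpow_pos_of_pos hδ _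
  refine ⟨M + (Fprim f R + 1) / δ ^ p, by positivity, ?_⟩
  set C : ℝ := M + (Fprim f R + 1) / δ ^ p with hC
  have hCM : M ≤ C := by
    have : 0 ≤ (Fprim f R + 1) / δ ^ p := by positivity
    rw [hC]; linarith
  have hCF : (Fprim f R + 1) / δ ^ p ≤ C := by rw [hC]; linarith
  have hC0 : 0 < C := by positivity
  intro s hs
  rcases le_or_gt R s with hsR | hsR
  · -- large s
    have hspos : 0 < s := lt_of_lt_of_le hRpos hsR
    have hfs : 0 < f s * s := mul_pos (hfpos s hspos) hspos
    have h1 := ha s (le_trans (le_max_left _ _) hsR)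
    rw [Real.dist_eq, sub_zero] at h1
    have h2 : Fprim f s / (f s * s) ≤ ε := le_of_lt (lt_of_le_of_lt (le_abs_self _) h1)
    have h3 : Fprim f s ≤ ε * (f s * s) := (div_le_iff₀ hfs).mp h2
    have h4 : 0 ≤ C * s ^ p := by positivity
    nlinarith
  · rcases eq_or_lt_of_le hs with hs0 | hspos
    · -- s = 0
      simp [← hs0, Fprim, Real.zero_rpow (by intro h; linarith : p ≠ 0)]
    rcases lt_or_ge s δ with hsδ | hsδ
    · -- small s
      have hg : Continuous fun t : ℝ => M * t ^ (p - 1) := by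
        apply continuous_const.mul
        apply continuous_iff_continuousAt.mpr
        intro x
        exact Real.continuousAt_rpow_const x _ (Or.inr (by linarith))
      have hbd : Fprim f s ≤ ∫ t in (0:ℝ)..s, M * t ^ (p - 1) := by
        apply intervalIntegral.integral_mono_on hs (hint 0 s) (hg.intervalIntegrable 0 s)
        intro t ht
        rcases eq_or_lt_of_le ht.1 with ht0 | ht0
        · rw [← ht0, hneg 0 le_rfl, Real.zero_rpow (by linarith : p - 1 ≠ 0), mul_zero]
        · exact hMbd t ht0 (lt_of_le_of_lt ht.2 hsδ)
      have hval : (∫ t in (0:ℝ)..s, M * t ^ (p - 1)) = M * (s ^ p / p) := by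
        rw [intervalIntegral.integral_const_mul, integral_rpow (Or.inl (by linarith))]
        rw [Real.zero_rpow (by intro h; linarith : p - 1 + 1 ≠ 0)]
        ring_nf
      have hsp : (0:ℝ) ≤ s ^ p := Real.rpow_nonneg hs _
      rw [hval] at hbd
      have h5 : M * (s ^ p / p) ≤ C * s ^ p := by
        have h7 : s ^ p / p ≤ s ^ p := div_le_self hsp (by linarith)
        calc M * (s ^ p / p) ≤ M * s ^ p := mul_le_mul_of_nonneg_left h7 hM0.le
        _ ≤ C * s ^ p := mul_le_mul_of_nonneg_right hCM hsp
      have h6 : 0 ≤ ε * f s * s := mul_nonneg (mul_nonneg hε.le (hfnn s)) hs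
      calc Fprim f s ≤ C * s ^ p := le_trans hbd h5
      _ ≤ C * s ^ p + ε * f s * s := by linarith
    · -- medium s
      have h1 : Fprim f s ≤ Fprim f R := hFmono s R hsR.le
      have hsp : δ ^ p ≤ s ^ p := Real.rpow_le_rpow hδ.le hsδ (by linarith)
      have h2 : (Fprim f R + 1) / δ ^ p * δ ^ p ≤ C * s ^ p := by
        apply mul_le_mul hCF hsp hδp.le hC0.le
      rw [div_mul_cancel₀ _ hδp.ne'] at h2
      have h6 : 0 ≤ ε * f s * s := mul_nonneg (mul_nonneg hε.le (hfnn s)) hs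
      linarith
end
end
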